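/- arXiv:1507.02974 — 2 statements merged into one kernel-verified Lean document; each statement's English description precedes it below -/
import Mathlib

section
/- Let ν be a σ-finite measure on ℝ^{I+1} with ν({0})=0, such that z⁰e^{u⁰z⁰+uⁱzⁱ} is ν-integrable for all u⁰,uⁱ∈ℝ, and assume ν({z : z⁰>0}) > 0 and ν({z : z⁰<0}) > 0. Then for each fixed uⁱ, the function φ(u⁰) = ∫ z⁰ e^{u⁰z⁰+uⁱzⁱ} dν(z) is strictly increasing in u⁰ and is surjective onto ℝ; hence it admits a continuous inverse defined on all of ℝ. -/
/-!
For each `a`, the map `u ↦ X a * exp (u * X a + Y a)` is increasing, strictly where `X a ≠ 0`;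
integrating gives strict monotonicity of `φ u = ∫ X * exp (u * X + Y)`, and monotonicity also
supplies the dominating function for continuity. For `u ≥ 0`, `exp (u x) ≥ 1 + u x` gives
`φ u ≥ φ 0 + u * ∫ (max X 0) ^ 2 * exp Y`, with positive slope since `{X > 0}` is charged, so
`φ → ∞`; replacing `(u, X)` by `(-u, -X)` gives `φ → -∞`. A continuous strictly monotone
surjection of `ℝ` is an order isomorphism, with continuous inverse.
-/

open MeasureTheory Real Filter Function

theorem strictMono_mul_exp_mul_add {x : ℝ} (hx : x ≠ 0) (y : ℝ) :
    StrictMono fun u : ℝ => x * exp (u * x + y) := by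
  intro u v huv
  rcases hx.lt_or_gt with hx | hx
  · exact mul_lt_mul_of_neg_left (exp_lt_exp.2 (by nlinarith)) hx
  · exact mul_lt_mul_of_pos_left (exp_lt_exp.2 (by nlinarith)) hx

theorem monotone_mul_exp_mul_add (x y : ℝ) : Monotone fun u : ℝ => x * exp (u * x + y) := by
  rcases eq_or_ne x 0 with rfl | hx
  · simpa using monotone_const
  · exact (strictMono_mul_exp_mul_add hx y).monotone

theorem mul_exp_add_mul_le_mul_exp_mul_add (x y : ℝ) {u : ℝ} (hu : 0 ≤ u) :
    x * exp y + u * (max x 0 ^ 2 * exp y) ≤ x * exp (u * x + y) := by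
  rcases le_or_gt x 0 with hx | hx
  · simpa [max_eq_right hx] using monotone_mul_exp_mul_add x y hu
  · rw [max_eq_left hx.le, exp_add]
    have hxy : 0 ≤ x * exp y := by positivity
    nlinarith [mul_le_mul_of_nonneg_left (add_one_le_exp (u * x)) hxy]

theorem sq_max_mul_exp_le_abs_mul_exp_add (x y : ℝ) :
    max x 0 ^ 2 * exp y ≤ |x * exp (x + y)| := by
  rcases le_or_gt x 0 with hx | hx
  · rw [max_eq_right hx, zero_pow two_ne_zero, zero_mul]
    exact abs_nonneg _
  · rw [max_eq_left hx.le, abs_of_pos (by positivity), exp_add, sq, mul_assoc]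
    gcongr
    exact (lt_add_one x).le.trans (add_one_le_exp x)

section

variable {α : Type*} [MeasurableSpace α] {μ : Measure α} {X Y : α → ℝ}

theorem strictMono_integral_mul_exp_mul_add
    (hf : ∀ u, Integrable (fun a => X a * exp (u * X a + Y a)) μ)
    (hsupp : 0 < μ {a | X a ≠ 0}) :
    StrictMono fun u => ∫ a, X a * exp (u * X a + Y a) ∂μ := by
  intro u v huv
  rw [← sub_pos, ← integral_sub (hf v) (hf u), integral_pos_iff_support_of_nonneg
    (fun a => sub_nonneg.2 (monotone_mul_exp_mul_add _ _ huv.le)) ((hf v).sub (hf u))]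
  exact hsupp.trans_le <| measure_mono fun a ha =>
    (sub_pos.2 (strictMono_mul_exp_mul_add ha (Y a) huv)).ne'

theorem continuous_integral_mul_exp_mul_add
    (hf : ∀ u, Integrable (fun a => X a * exp (u * X a + Y a)) μ) :
    Continuous fun u => ∫ a, X a * exp (u * X a + Y a) ∂μ := by
  refine continuous_iff_continuousAt.2 fun u₀ => continuousAt_of_dominated
    (bound := fun a =>
      max |X a * exp ((u₀ - 1) * X a + Y a)| |X a * exp ((u₀ + 1) * X a + Y a)|)
    (Eventually.of_forall fun u => (hf u).aestronglyMeasurable) ?_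
    ((hf _).abs.sup (hf _).abs) (Eventually.of_forall fun a => by fun_prop)
  filter_upwards [Ioo_mem_nhds (sub_one_lt u₀) (lt_add_one u₀)] with u hu
  exact Eventually.of_forall fun a => abs_le_max_abs_abs
    (monotone_mul_exp_mul_add _ _ hu.1.le) (monotone_mul_exp_mul_add _ _ hu.2.le)

theorem tendsto_integral_mul_exp_mul_add_atTop (hX : AEMeasurable X μ) (hY : AEMeasurable Y μ)
    (hf : ∀ u, Integrable (fun a => X a * exp (u * X a + Y a)) μ)
    (hpos : 0 < μ {a | 0 < X a}) :
    Tendsto (fun u => ∫ a, X a * exp (u * X a + Y a) ∂μ) atTop atTop := by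
  have hf₀ : Integrable (fun a => X a * exp (Y a)) μ := by simpa using hf 0
  have hg : Integrable (fun a => max (X a) 0 ^ 2 * exp (Y a)) μ :=
    (hf 1).abs.mono' (by fun_prop) <| Eventually.of_forall fun a => by
      simpa [abs_of_nonneg (by positivity : 0 ≤ max (X a) 0 ^ 2 * exp (Y a))]
        using sq_max_mul_exp_le_abs_mul_exp_add (X a) (Y a)
  have hslope : 0 < ∫ a, max (X a) 0 ^ 2 * exp (Y a) ∂μ := by
    rw [integral_pos_iff_support_of_nonneg (fun a => by positivity) hg]
    exact hpos.trans_le <| measure_mono fun a (ha : 0 < X a) => by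
      simp [max_eq_left ha.le, ha.ne', (exp_pos _).ne']
  have hlower : ∀ u, 0 ≤ u →
      (∫ a, X a * exp (Y a) ∂μ) + u * ∫ a, max (X a) 0 ^ 2 * exp (Y a) ∂μ ≤
        ∫ a, X a * exp (u * X a + Y a) ∂μ := fun u hu => by
    rw [← integral_const_mul, ← integral_add hf₀ (hg.const_mul u)]
    exact integral_mono (hf₀.add (hg.const_mul u)) (hf u) fun a =>
      mul_exp_add_mul_le_mul_exp_mul_add (X a) (Y a) hu
  exact tendsto_atTop_mono' atTop ((eventually_ge_atTop 0).mono hlower)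
    (tendsto_atTop_add_const_left _ _ (tendsto_id.atTop_mul_const hslope))

theorem tendsto_integral_mul_exp_mul_add_atBot (hX : AEMeasurable X μ) (hY : AEMeasurable Y μ)
    (hf : ∀ u, Integrable (fun a => X a * exp (u * X a + Y a)) μ)
    (hneg : 0 < μ {a | X a < 0}) :
    Tendsto (fun u => ∫ a, X a * exp (u * X a + Y a) ∂μ) atBot atBot := by
  have hf' : ∀ u, Integrable (fun a => -X a * exp (u * -X a + Y a)) μ := fun u => by
    simpa using (hf (-u)).neg
  have htop := tendsto_integral_mul_exp_mul_add_atTop hX.neg hY hf' (by simpa using hneg)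
  have hreflect : (fun u => ∫ a, X a * exp (u * X a + Y a) ∂μ) =
      fun u => -∫ a, -X a * exp (-u * -X a + Y a) ∂μ := by
    funext u
    rw [← integral_neg]
    simp only [neg_mul, mul_neg, neg_neg]
  rw [hreflect]
  exact tendsto_neg_atTop_atBot.comp (htop.comp tendsto_neg_atBot_atTop)

end

theorem stmt2_general (I : ℕ) (ν : Measure (Fin (I + 1) → ℝ)) (i : Fin (I + 1))
    (hInt : ∀ u0 ui : ℝ, Integrable (fun z => z 0 * Real.exp (u0 * z 0 + ui * z i)) ν)
    (hpos : 0 < ν {z | 0 < z 0}) (hneg : 0 < ν {z | z 0 < 0})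
    (ui : ℝ) :
    StrictMono (fun u0 : ℝ => ∫ z, z 0 * Real.exp (u0 * z 0 + ui * z i) ∂ν) ∧
    Function.Surjective (fun u0 : ℝ => ∫ z, z 0 * Real.exp (u0 * z 0 + ui * z i) ∂ν) ∧
    ∃ f : ℝ → ℝ, Continuous f ∧
      Function.LeftInverse f (fun u0 : ℝ => ∫ z, z 0 * Real.exp (u0 * z 0 + ui * z i) ∂ν) ∧
      Function.RightInverse f (fun u0 : ℝ => ∫ z, z 0 * Real.exp (u0 * z 0 + ui * z i) ∂ν) := by
  have hX : AEMeasurable (fun z : Fin (I + 1) → ℝ => z 0) ν :=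
    Measurable.aemeasurable (by fun_prop)
  have hY : AEMeasurable (fun z : Fin (I + 1) → ℝ => ui * z i) ν :=
    Measurable.aemeasurable (by fun_prop)
  have hmono := strictMono_integral_mul_exp_mul_add (hInt · ui)
    (hpos.trans_le (measure_mono fun z (hz : 0 < z 0) => hz.ne'))
  have hsurj := (continuous_integral_mul_exp_mul_add (hInt · ui)).surjective
    (tendsto_integral_mul_exp_mul_add_atTop hX hY (hInt · ui) hpos)
    (tendsto_integral_mul_exp_mul_add_atBot hX hY (hInt · ui) hneg)
  let e := StrictMono.orderIsoOfSurjective _ hmono hsurj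
  exact ⟨hmono, hsurj, e.symm, e.symm.continuous, e.symm_apply_apply, e.apply_symm_apply⟩

/-- If z⁰e^{u⁰z⁰+uⁱzⁱ} is ν-integrable for all u⁰,uⁱ and ν charges both
{z⁰>0} and {z⁰<0}, then φ(u⁰) = ∫ z⁰ e^{u⁰z⁰+uⁱzⁱ} dν is strictly increasing and
surjective onto ℝ, and admits a continuous (two-sided) inverse on ℝ. -/
theorem stmt2 (I : ℕ) (ν : Measure (Fin (I + 1) → ℝ)) [SigmaFinite ν] (i : Fin (I + 1))
    (h0 : ν {0} = 0)
    (hInt : ∀ u0 ui : ℝ, Integrable (fun z => z 0 * Real.exp (u0 * z 0 + ui * z i)) ν)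
    (hpos : 0 < ν {z | 0 < z 0}) (hneg : 0 < ν {z | z 0 < 0})
    (ui : ℝ) :
    StrictMono (fun u0 : ℝ => ∫ z, z 0 * Real.exp (u0 * z 0 + ui * z i) ∂ν) ∧
    Function.Surjective (fun u0 : ℝ => ∫ z, z 0 * Real.exp (u0 * z 0 + ui * z i) ∂ν) ∧
    ∃ f : ℝ → ℝ, Continuous f ∧
      Function.LeftInverse f (fun u0 : ℝ => ∫ z, z 0 * Real.exp (u0 * z 0 + ui * z i) ∂ν) ∧
      Function.RightInverse f (fun u0 : ℝ => ∫ z, z 0 * Real.exp (u0 * z 0 + ui * z i) ∂ν) :=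
  stmt2_general I ν i hInt hpos hneg ui
end

section
/- Let τ_1,…,τ_I > 0 with τ_Σ = Σᵢτᵢ, and let a_1,…,a_I ∈ ℝ with Σᵢ aᵢ = a. Then Σᵢ (τᵢ/τ_Σ) e^{−aᵢ/τᵢ} ≥ e^{−a/τ_Σ}. In particular, with aᵢ = θᵢ*σ_D z⁰ + σᵢ zⁱ and Σᵢθᵢ* = 1, one obtains Σᵢ (τᵢ/τ_Σ) e^{−(θᵢ*σ_D z⁰ + σᵢzⁱ)/τᵢ} ≥ e^{−(σ_D z⁰ + Σᵢ σᵢzⁱ)/τ_Σ} pointwise, and hence r^rep − r = ∫ ( Σᵢ(τᵢ/τ_Σ)e^{−(θᵢ*σ_Dz⁰+σᵢzⁱ)/τᵢ} − e^{−(σ_Dz⁰+Σᵢσᵢzⁱ)/τ_Σ} ) dν(z) ≥ 0. -/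
open MeasureTheory Real Finset

/-- Jensen-type inequality for exponential weights: with τᵢ > 0 summing to
τ_Σ and any reals aᵢ with Σaᵢ = a, one has Σᵢ (τᵢ/τ_Σ) e^{−aᵢ/τᵢ} ≥ e^{−a/τ_Σ}.  In
particular, with aᵢ = θᵢ*σ_D z⁰ + σᵢ zⁱ and Σθᵢ* = 1, the pointwise inequality holds
for every z, and hence the incompleteness impact on the interest rate
r^rep − r = ∫ (Σᵢ(τᵢ/τ_Σ)e^{−aᵢ(z)/τᵢ} − e^{−(σ_Dz⁰+Σσᵢzⁱ)/τ_Σ}) dν(z) is nonnegative. -/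
theorem stmt7 (I : ℕ) (τ : Fin I → ℝ) (hτ : ∀ i, 0 < τ i)
    (τS : ℝ) (hτS : τS = ∑ i, τ i)
    (ν : Measure (Fin (I + 1) → ℝ))
    (σD : ℝ) (σ : Fin I → ℝ) (θ : Fin I → ℝ) (hθ : ∑ i, θ i = 1)
    (hInt1 : Integrable (fun z =>
      ∑ i, (τ i / τS) * Real.exp (-(θ i * σD * z 0 + σ i * z i.succ) / τ i)) ν)
    (hInt2 : Integrable (fun z =>
      Real.exp (-(σD * z 0 + ∑ i, σ i * z i.succ) / τS)) ν) :
    (∀ (a : Fin I → ℝ),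
      Real.exp (-(∑ i, a i) / τS) ≤ ∑ i, (τ i / τS) * Real.exp (-(a i) / τ i)) ∧
    (∀ z : Fin (I + 1) → ℝ,
      Real.exp (-(σD * z 0 + ∑ i, σ i * z i.succ) / τS) ≤
        ∑ i, (τ i / τS) * Real.exp (-(θ i * σD * z 0 + σ i * z i.succ) / τ i)) ∧
    0 ≤ ∫ z, (∑ i, (τ i / τS) * Real.exp (-(θ i * σD * z 0 + σ i * z i.succ) / τ i)
          - Real.exp (-(σD * z 0 + ∑ i, σ i * z i.succ) / τS)) ∂ν := by
  have hI : I ≠ 0 := by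
    rintro rfl
    simp at hθ
  have hτS0 : 0 < τS := by
    rw [hτS]
    apply Finset.sum_pos (fun i _ => hτ i)
    have : Nonempty (Fin I) := Fin.pos_iff_nonempty.mp (Nat.pos_of_ne_zero hI)
    exact Finset.univ_nonempty
  have key : ∀ (a : Fin I → ℝ),
      Real.exp (-(∑ i, a i) / τS) ≤ ∑ i, (τ i / τS) * Real.exp (-(a i) / τ i) := by
    intro a
    have := convexOn_exp.map_sum_le (t := Finset.univ) (w := fun i => τ i / τS)
      (p := fun i => -(a i) / τ i)
      (fun i _ => div_nonneg (hτ i).le hτS0.le)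
      (by rw [← Finset.sum_div, ← hτS, div_self hτS0.ne'])
      (fun i _ => Set.mem_univ _)
    refine le_trans (le_of_eq ?_) this
    congr 1
    rw [neg_div, Finset.sum_div, ← Finset.sum_neg_distrib]
    apply Finset.sum_congr rfl
    intro i _
    have hti := (hτ i).ne'
    field_simp
    rw [smul_eq_mul, ← mul_assoc, mul_div_cancel₀ _ hτS0.ne', mul_neg, mul_div_cancel₀ _ hti]
  have key2 : ∀ z : Fin (I + 1) → ℝ,
      Real.exp (-(σD * z 0 + ∑ i, σ i * z i.succ) / τS) ≤
        ∑ i, (τ i / τS) * Real.exp (-(θ i * σD * z 0 + σ i * z i.succ) / τ i) := by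
    intro z
    have := key (fun i => θ i * σD * z 0 + σ i * z i.succ)
    have hsum : ∑ i, (θ i * σD * z 0 + σ i * z i.succ)
        = σD * z 0 + ∑ i, σ i * z i.succ := by
      rw [Finset.sum_add_distrib]
      congr 1
      rw [← Finset.sum_mul, ← Finset.sum_mul, hθ, one_mul]
    rwa [hsum] at this
  refine ⟨key, key2, ?_⟩
  apply integral_nonneg
  intro z
  simpa [sub_nonneg] using key2 z
end
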